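/- Fix d ≥ 2 and an integer r with r ∉ {1,2,4}, and let N, k ∈ ℕ. Let y ∈ X_r satisfy Range_{∂D_{2N+2r+k+1}}(y) ≤ 2k and let x ∈ X_r. Then: (1) if r is odd, or if for all n ∈ ℤ^d the element x_n − y_n ∈ ℤ/rℤ is the residue of an even integer, then there exists z ∈ X_r with z_n = x_n for n ∈ D_N and z_n = y_n for n ∉ D_{2N+2r+k+1}; (2) if r is even and for all n ∈ ℤ^d the element x_n − y_n is the residue of an odd integer, then there exists z ∈ X_r with z_n = x_{n+e₁} for n ∈ D_N and z_n = y_n for n ∉ D_{2N+2r+k+1}. -/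

import Mathlib

open scoped BigOperators

/-- Sites of the standard Cayley graph of `ℤ^d`. -/
abbrev Site (d : ℕ) := Fin d → ℤ

/-- Adjacency in the standard Cayley graph of `ℤ^d`: `‖n - m‖₁ = 1`. -/
def adjacent {d : ℕ} (n m : Site d) : Prop :=
  (∑ i, |n i - m i|) = 1

/-- The (outer) boundary of a set of sites. -/
def siteBdry {d : ℕ} (F : Set (Site d)) : Set (Site d) :=
  {m | m ∉ F ∧ ∃ n ∈ F, adjacent n m}

/-- The nearest neighbor shift of finite type `X_r`. -/
def Xr (d r : ℕ) : Set (Site d → ZMod r) :=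
  {x | ∀ n m : Site d, adjacent n m → x n - x m = 1 ∨ x n - x m = -1}

/-- A height function on `ℤ^d`. -/
def IsHeightFn {d : ℕ} (h : Site d → ℤ) : Prop :=
  ∀ n m : Site d, adjacent n m → |h n - h m| = 1

/-- `h` is a height-function lift of the configuration `x ∈ (ℤ/rℤ)^{ℤ^d}`. -/
def LiftsTo {d r : ℕ} (h : Site d → ℤ) (x : Site d → ZMod r) : Prop :=
  IsHeightFn h ∧ ∀ n : Site d, ((h n : ZMod r)) = x n

/-- `Range_A(h) = max_{n ∈ A} h n - min_{n ∈ A} h n`. -/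
noncomputable def RangeOn {d : ℕ} (h : Site d → ℤ) (A : Set (Site d)) : ℤ :=
  sSup (h '' A) - sInf (h '' A)

/-- The `l¹`-ball `D_N = {n ∈ ℤ^d : ‖n‖₁ ≤ N}`. -/
def ball (d N : ℕ) : Set (Site d) :=
  {n | (∑ i, |n i|) ≤ (N : ℤ)}

/-!
Since `r ∤ 4`, every `x ∈ X_r` lifts to a height function: around a unit square the four lifted
steps `±1` sum to `0`, `±2` or `±4`, and this sum vanishes mod `r`, hence is `0`; so the steps are a
closed form on `ℤ^d` and integrate along staircase paths to a potential.

Given lifts `f` of `x` and `g` of `y` with `f 0 - g 0` even (in case (1) add `r` to `f` when `r` is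
odd; in case (2) replace `f` by `f (· + e₁)`), pick `c` with `|g - c| ≤ k` on the sphere
`‖n‖₁ = M + 1`, `M = 2N + 2r + k + 1`, which the bound on the range allows. Shifting `f` by a
multiple of `2r` we may assume `0 ≤ f 0 - c < 2r`; put `R = 2N + f 0 - c`. Inside the sphere
`‖n‖₁ = R` clamp `f` between the tents `c ± (R - ‖n‖₁)`, outside it clamp `g` between
`c ± (‖n‖₁ - R)`: both clamps equal `c` on that sphere and all functions involved have the same
parity, so the result is a height function. It equals `f` on `D_N` because `f` is 1-Lipschitz, and
`g` off `D_M` because `g` is within `k` of `c` on the sphere `‖n‖₁ = M + 1`.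
-/

open Function

section Lattice

variable {d : ℕ}

def l1Norm (n : Site d) : ℤ := ∑ i, |n i|

lemma l1Norm_nonneg (n : Site d) : 0 ≤ l1Norm n :=
  Finset.sum_nonneg fun _ _ => abs_nonneg _

@[simp]
lemma l1Norm_zero : l1Norm (0 : Site d) = 0 := by simp [l1Norm]

lemma l1Norm_eq_zero {n : Site d} : l1Norm n = 0 ↔ n = 0 := by
  simp [l1Norm, Finset.sum_eq_zero_iff_of_nonneg, funext_iff]

lemma l1Norm_update (n : Site d) (i : Fin d) (s : ℤ) :
    l1Norm (update n i s) = l1Norm n - |n i| + |s| := by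
  simp only [l1Norm, apply_update (fun _ => abs), Finset.sum_update_of_mem (Finset.mem_univ i),
    ← Finset.add_sum_erase _ _ (Finset.mem_univ i), Finset.sdiff_singleton_eq_erase]
  ring

lemma mem_ball {N : ℕ} {n : Site d} : n ∈ ball d N ↔ l1Norm n ≤ N := Iff.rfl

lemma adjacent.symm {n m : Site d} (h : adjacent n m) : adjacent m n := by
  simpa only [adjacent, abs_sub_comm] using h

lemma adjacent_add_right {n m : Site d} (v : Site d) : adjacent (n + v) (m + v) ↔ adjacent n m := by
  simp [adjacent]

lemma adjacent_update (b : Site d) (i : Fin d) {s t : ℤ} (h : |s - t| = 1) :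
    adjacent (update b i s) (update b i t) := by
  rw [adjacent, Finset.sum_eq_single i (fun j _ hj => by simp [update_of_ne hj]) (by simp)]
  simpa using h

lemma adjacent_update_add_one (p : Site d) (j : Fin d) : adjacent (update p j (p j + 1)) p := by
  simpa using adjacent_update p j (s := p j + 1) (t := p j) (by simp)

lemma adjacent_single_zero (i : Fin d) : adjacent (Pi.single i 1) 0 :=
  (by simpa using adjacent_update_add_one 0 i : adjacent (update 0 i 1) 0)

lemma adjacent.exists_eq_update {n m : Site d} (h : adjacent n m) :
    ∃ i, |n i - m i| = 1 ∧ m = update n i (m i) := by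
  obtain ⟨i, hi⟩ : ∃ i, n i ≠ m i := by
    by_contra! hc
    simp [adjacent, hc] at h
  have hsplit := Finset.add_sum_erase Finset.univ (fun j => |n j - m j|) (Finset.mem_univ i)
  have hpos : 0 < |n i - m i| := abs_pos.mpr (sub_ne_zero.mpr hi)
  have hrest : ∑ j ∈ Finset.univ.erase i, |n j - m j| = 0 := by
    have := Finset.sum_nonneg fun j (_ : j ∈ Finset.univ.erase i) => abs_nonneg (n j - m j)
    rw [adjacent] at h
    omega
  refine ⟨i, by rw [adjacent] at h; omega, funext fun j => ?_⟩
  rcases eq_or_ne j i with rfl | hj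
  · simp
  · rw [update_of_ne hj]
    have := (Finset.sum_eq_zero_iff_of_nonneg fun j _ => abs_nonneg (n j - m j)).mp hrest j
      (Finset.mem_erase.mpr ⟨hj, Finset.mem_univ j⟩)
    rw [abs_eq_zero, sub_eq_zero] at this
    exact this.symm

lemma exists_adjacent_l1Norm_add_one_eq {n : Site d} (hn : n ≠ 0) :
    ∃ m, adjacent n m ∧ l1Norm m + 1 = l1Norm n := by
  obtain ⟨i, hi⟩ : ∃ i, n i ≠ 0 := by
    by_contra! hc
    exact hn (funext hc)
  obtain ⟨s, hs⟩ : ∃ s, |n i - s| = 1 ∧ |s| + 1 = |n i| := by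
    rcases hi.lt_or_gt with h | h
    · exact ⟨n i + 1, by simp, by rw [abs_of_neg h, abs_of_nonpos (by omega)]; ring⟩
    · exact ⟨n i - 1, by simp, by rw [abs_of_pos h, abs_of_nonneg (by omega)]; ring⟩
  refine ⟨update n i s, ?_, ?_⟩
  · simpa using adjacent_update n i hs.1
  · rw [l1Norm_update]; linarith [hs.2]

lemma isHeightFn_l1Norm : IsHeightFn (l1Norm : Site d → ℤ) := by
  intro n m h
  obtain ⟨i, hi, hm⟩ := h.exists_eq_update
  rw [hm, l1Norm_update]
  grind

theorem l1Norm_induction_from (s : ℕ) {P : Site d → Prop} (base : ∀ q, l1Norm q = s → P q)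
    (step : ∀ n m, adjacent n m → l1Norm m + 1 = l1Norm n → P m → P n) :
    ∀ n, s ≤ l1Norm n → P n := by
  suffices ∀ j : ℕ, ∀ n, l1Norm n = s + j → P n from
    fun n hn => this (l1Norm n - s).toNat n (by omega)
  intro j
  induction j with
  | zero => exact fun n hn => base n (by simpa using hn)
  | succ j ih =>
    intro n hn
    have hn0 : n ≠ 0 := by
      rintro rfl
      simp at hn
      omega
    obtain ⟨m, hnm, hm⟩ := exists_adjacent_l1Norm_add_one_eq hn0
    exact step n m hnm hm (ih m (by push_cast at hn; omega))

theorem l1Norm_induction {P : Site d → Prop} (zero : P 0)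
    (step : ∀ n m, adjacent n m → l1Norm m + 1 = l1Norm n → P m → P n) (n : Site d) : P n :=
  l1Norm_induction_from 0 (fun _ hq => l1Norm_eq_zero.mp hq ▸ zero) step n (l1Norm_nonneg n)

lemma siteBdry_ball (M : ℕ) : siteBdry (ball d M) = {q | l1Norm q = M + 1} := by
  ext q
  constructor
  · rintro ⟨hq, p, hp, hpq⟩
    have := isHeightFn_l1Norm p q hpq
    rw [mem_ball] at hq hp
    rw [abs_eq zero_le_one] at this
    simp only [Set.mem_ofPred_eq]
    omega
  · intro hq
    have hq0 : q ≠ 0 := by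
      rintro rfl
      simp at hq
      omega
    obtain ⟨m, hqm, hm⟩ := exists_adjacent_l1Norm_add_one_eq hq0
    simp only [Set.mem_ofPred_eq] at hq
    exact ⟨by rw [mem_ball]; omega, m, by rw [mem_ball]; omega, hqm.symm⟩

end Lattice

namespace IsHeightFn

variable {d : ℕ} {u v : Site d → ℤ}

lemma neg (hu : IsHeightFn u) : IsHeightFn fun n => -u n := fun n m h => by
  rw [neg_sub_neg, abs_sub_comm]
  exact hu n m h

lemma const_add (hu : IsHeightFn u) (a : ℤ) : IsHeightFn fun n => a + u n := fun n m h => by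
  simpa using hu n m h

lemma comp_add_right (hu : IsHeightFn u) (v : Site d) : IsHeightFn fun n => u (n + v) :=
  fun _ _ h => hu _ _ ((adjacent_add_right v).mpr h)

lemma even_sub (hu : IsHeightFn u) (hv : IsHeightFn v) (h0 : Even (u 0 - v 0)) (n : Site d) :
    Even (u n - v n) := by
  refine l1Norm_induction (P := fun n => Even (u n - v n)) h0 (fun n m hnm _ hm => ?_) n
  have h1 := hu n m hnm
  have h2 := hv n m hnm
  rw [abs_eq zero_le_one] at h1 h2
  rw [Int.even_iff] at hm ⊢
  omega

lemma max (hu : IsHeightFn u) (hv : IsHeightFn v) (h0 : Even (u 0 - v 0)) :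
    IsHeightFn fun n => max (u n) (v n) := by
  intro n m hnm
  have h1 := hu n m hnm
  have h2 := hv n m hnm
  have e1 := Int.even_iff.mp (hu.even_sub hv h0 n)
  have e2 := Int.even_iff.mp (hu.even_sub hv h0 m)
  show |Max.max (u n) (v n) - Max.max (u m) (v m)| = 1
  rw [abs_eq zero_le_one] at h1 h2 ⊢
  omega

lemma min (hu : IsHeightFn u) (hv : IsHeightFn v) (h0 : Even (u 0 - v 0)) :
    IsHeightFn fun n => min (u n) (v n) := by
  have h0' : Even (-u 0 - -v 0) := by rwa [neg_sub_neg, ← neg_sub, even_neg]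
  simpa only [max_neg_neg, neg_neg] using (hu.neg.max hv.neg h0').neg

lemma abs_sub_le_add_l1Norm_sub (hu : IsHeightFn u) {s : ℕ} {c k : ℤ}
    (hs : ∀ q, l1Norm q = s → |u q - c| ≤ k) (n : Site d) (hn : s ≤ l1Norm n) :
    |u n - c| ≤ k + (l1Norm n - s) := by
  refine l1Norm_induction_from s (P := fun n => |u n - c| ≤ k + (l1Norm n - s))
    (fun q hq => by simpa [hq] using hs q hq) (fun n m hnm _ ih => ?_) n hn
  calc |u n - c| ≤ |u n - u m| + |u m - c| := abs_sub_le _ _ _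
    _ ≤ k + (l1Norm n - s) := by rw [hu n m hnm]; linarith

lemma abs_sub_apply_zero_le (hu : IsHeightFn u) (n : Site d) : |u n - u 0| ≤ l1Norm n := by
  simpa using hu.abs_sub_le_add_l1Norm_sub (s := 0) (k := 0)
    (fun q hq => by simp [l1Norm_eq_zero.mp hq]) n (l1Norm_nonneg n)

end IsHeightFn

section Patch

variable {d : ℕ}

def clamp (lo hi u : Site d → ℤ) (n : Site d) : ℤ := max (lo n) (min (u n) (hi n))

lemma clamp_of_le_of_le {lo hi u : Site d → ℤ} {n : Site d} (h₁ : lo n ≤ u n) (h₂ : u n ≤ hi n) :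
    clamp lo hi u n = u n := by
  simp [clamp, h₁, h₂]

lemma clamp_of_eq {lo hi u : Site d → ℤ} {n : Site d} (h : lo n = hi n) :
    clamp lo hi u n = lo n := by
  simp [clamp, h]

lemma IsHeightFn.clamp {lo hi u : Site d → ℤ} (hu : IsHeightFn u) (hlo : IsHeightFn lo)
    (hhi : IsHeightFn hi) (h₁ : Even (u 0 - lo 0)) (h₂ : Even (u 0 - hi 0)) :
    IsHeightFn (clamp lo hi u) := by
  refine hlo.max (hu.min hhi h₂) ?_
  rw [Int.even_iff] at h₁ h₂ ⊢
  omega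

lemma IsHeightFn.piecewise_l1Norm_le {u v : Site d → ℤ} (hu : IsHeightFn u) (hv : IsHeightFn v)
    {R : ℤ} (h : ∀ n, l1Norm n = R → u n = v n) :
    IsHeightFn fun n => if l1Norm n ≤ R then u n else v n := by
  intro n m hnm
  have hR := isHeightFn_l1Norm n m hnm
  rw [abs_eq zero_le_one] at hR
  by_cases hn : l1Norm n ≤ R <;> by_cases hm : l1Norm m ≤ R <;>
    simp only [hn, hm, if_true, if_false]
  · exact hu n m hnm
  · rw [h n (by omega)]; exact hv n m hnm
  · rw [h m (by omega)]; exact hv n m hnm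
  · exact hv n m hnm

theorem exists_heightFn_patch {f g : Site d → ℤ} (hf : IsHeightFn f) (hg : IsHeightFn g)
    (hfg : Even (f 0 - g 0)) {c R : ℤ} (hR : Even (f 0 - c - R)) :
    ∃ z : Site d → ℤ, IsHeightFn z ∧ (∀ n, |f n - c| ≤ R - l1Norm n → z n = f n) ∧
      ∀ n, |g n - c| ≤ l1Norm n - R → z n = g n := by
  set lo : Site d → ℤ := fun n => c - R + l1Norm n
  set hi : Site d → ℤ := fun n => c + R + -l1Norm n
  have hlo : IsHeightFn lo := isHeightFn_l1Norm.const_add _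
  have hhi : IsHeightFn hi := isHeightFn_l1Norm.neg.const_add _
  rw [Int.even_iff] at hfg hR
  have hflo : Even (f 0 - lo 0) := Int.even_iff.mpr (by simp only [lo, l1Norm_zero]; omega)
  have hfhi : Even (f 0 - hi 0) := Int.even_iff.mpr (by simp only [hi, l1Norm_zero]; omega)
  have hglo : Even (g 0 - lo 0) := Int.even_iff.mpr (by simp only [lo, l1Norm_zero]; omega)
  have hghi : Even (g 0 - hi 0) := Int.even_iff.mpr (by simp only [hi, l1Norm_zero]; omega)
  have hsphere : ∀ n, l1Norm n = R → lo n = hi n := fun n hn =>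
    show c - R + l1Norm n = c + R + -l1Norm n by omega
  refine ⟨fun n => if l1Norm n ≤ R then clamp lo hi f n else clamp hi lo g n,
    (hf.clamp hlo hhi hflo hfhi).piecewise_l1Norm_le (hg.clamp hhi hlo hghi hglo) fun n hn => by
      rw [clamp_of_eq (hsphere n hn), clamp_of_eq (hsphere n hn).symm, hsphere n hn], ?_, ?_⟩
  · intro n hn
    have := abs_le.mp hn
    beta_reduce
    rw [if_pos (by linarith)]
    exact clamp_of_le_of_le (by simp only [lo]; linarith) (by simp only [hi]; linarith)
  · intro n hn
    have := abs_le.mp hn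
    beta_reduce
    split_ifs with hnR
    · rw [clamp_of_eq (hsphere n (by linarith))]
      simp only [lo]
      linarith
    · exact clamp_of_le_of_le (by simp only [hi]; linarith) (by simp only [lo]; linarith)

end Patch

section Potential

variable {G : Type*} [AddCommGroup G]

/-- The discrete antiderivative of `w` vanishing at `0`. -/
noncomputable def cumSum (w : ℤ → G) (t : ℤ) : G :=
  ∑ s ∈ Finset.Ico 0 t, w s - ∑ s ∈ Finset.Ico t 0, w s

@[simp]
lemma cumSum_zero (w : ℤ → G) : cumSum w 0 = 0 := by simp [cumSum]

lemma cumSum_add_one (w : ℤ → G) (t : ℤ) : cumSum w (t + 1) = cumSum w t + w t := by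
  rcases le_or_gt 0 t with ht | ht
  · rw [cumSum, cumSum, ← Finset.insert_Ico_right_eq_Ico_add_one ht,
      Finset.sum_insert Finset.right_notMem_Ico, Finset.Ico_eq_empty_of_le ht,
      Finset.Ico_eq_empty_of_le (by omega : (0 : ℤ) ≤ t + 1)]
    abel
  · rw [cumSum, cumSum, ← Finset.insert_Ico_add_one_left_eq_Ico ht,
      Finset.sum_insert (by simp), Finset.Ico_eq_empty_of_le (by omega : t + 1 ≤ 0),
      Finset.Ico_eq_empty_of_le ht.le]
    abel

lemma Int.funext_of_sub_add_one {f g : ℤ → G} (h0 : f 0 = g 0)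
    (h : ∀ t, f (t + 1) - f t = g (t + 1) - g t) : f = g := by
  funext t
  induction t using Int.induction_on with
  | zero => exact h0
  | succ t ih => linear_combination (norm := module) ih + h t
  | pred t ih =>
    have := h (-t - 1)
    rw [sub_add_cancel] at this
    linear_combination (norm := module) ih - this

variable {d : ℕ}

structure IsClosedForm (ω : Site d → Site d → G) : Prop where
  antisymm : ∀ n m, adjacent n m → ω m n = -ω n m
  plaquette : ∀ a b b' c, adjacent c b → adjacent b a → adjacent c b' → adjacent b' a →
    ω c b + ω b a = ω c b' + ω b' a

def truncate (n : Site d) (c : ℕ) : Site d := fun j => if (j : ℕ) < c then n j else 0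

lemma truncate_of_le (n : Site d) {c : ℕ} (hc : d ≤ c) : truncate n c = n :=
  funext fun j => if_pos (by omega)

lemma update_truncate_zero (n : Site d) (i : Fin d) : update (truncate n i) i 0 = truncate n i :=
  update_eq_self_iff.mpr (if_neg (lt_irrefl _)).symm

lemma update_truncate (n : Site d) (i : Fin d) :
    update (truncate n i) i (n i) = truncate n (i + 1) := by
  funext j
  rcases eq_or_ne j i with rfl | hj
  · simp [truncate]
  · have := Fin.val_ne_of_ne hj
    simp only [truncate, update_of_ne hj]
    split_ifs <;> omega

lemma truncate_update (n : Site d) (j : Fin d) (v : ℤ) (c : ℕ) :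
    truncate (update n j v) c =
      if (j : ℕ) < c then update (truncate n c) j v else truncate n c := by
  funext j'
  rcases eq_or_ne j' j with rfl | hj
  · split_ifs with h <;> simp [truncate, h]
  · split_ifs <;> simp [truncate, update_of_ne hj]

noncomputable def lineSum (ω : Site d → Site d → G) (b : Site d) (i : Fin d) : ℤ → G :=
  cumSum fun t => ω (update b i (t + 1)) (update b i t)

lemma lineSum_add_one (ω : Site d → Site d → G) (b : Site d) (i : Fin d) (t : ℤ) :
    lineSum ω b i (t + 1) = lineSum ω b i t + ω (update b i (t + 1)) (update b i t) :=
  cumSum_add_one _ t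

lemma IsClosedForm.lineSum_sub_lineSum {ω : Site d → Site d → G} (hω : IsClosedForm ω)
    {b b' : Site d} {i : Fin d} (hrung : ∀ t, adjacent (update b' i t) (update b i t)) (t : ℤ) :
    lineSum ω b' i t - lineSum ω b i t =
      ω (update b' i t) (update b i t) - ω (update b' i 0) (update b i 0) := by
  revert t
  refine congrFun (Int.funext_of_sub_add_one (by simp [lineSum]) fun t => ?_)
  have := hω.plaquette _ _ _ _ (hrung (t + 1)) (adjacent_update b i (by simp))
    (adjacent_update b' i (by simp)) (hrung t)
  simp only [lineSum_add_one]
  linear_combination (norm := module) -this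

/-- Integral of `ω` along the path from `0` to `n` that first moves in coordinate `0`, then in
coordinate `1`, and so on. -/
noncomputable def potential (ω : Site d → Site d → G) (n : Site d) : G :=
  ∑ i : Fin d, lineSum ω (truncate n i) i (n i)

lemma IsClosedForm.potential_update_add_one {ω : Site d → Site d → G} (hω : IsClosedForm ω)
    (n : Site d) (j : Fin d) :
    potential ω (update n j (n j + 1)) - potential ω n = ω (update n j (n j + 1)) n := by
  set n' := update n j (n j + 1) with hn'
  -- `σ c` is the difference of the two staircase paths after their first `c` legs
  set σ : ℕ → G := fun c => if (j : ℕ) < c then ω (truncate n' c) (truncate n c) else 0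
  have hterm : ∀ i : Fin d, lineSum ω (truncate n' i) i (n' i) - lineSum ω (truncate n i) i (n i)
      = σ (i + 1) - σ i := by
    intro i
    rcases lt_trichotomy (i : ℕ) j with hij | hij | hij
    · have hne : i ≠ j := Fin.ne_of_lt hij
      simp only [σ, n', truncate_update, update_of_ne hne, if_neg (by omega : ¬ (j : ℕ) < i),
        if_neg (by omega : ¬ (j : ℕ) < i + 1), sub_self]
    · obtain rfl : i = j := Fin.ext hij
      simp only [σ, n', truncate_update, lt_irrefl, if_false, update_self, lineSum_add_one,
        if_pos (Nat.lt_succ_self _), ← update_truncate, update_idem]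
      abel
    · have hne : j ≠ i := Fin.ne_of_lt hij
      have hbj : truncate n i j = n j := if_pos hij
      have := hω.lineSum_sub_lineSum (b := truncate n i) (b' := truncate n' i) (i := i) (fun t => by
        rw [hn', truncate_update, if_pos hij, update_comm hne]
        have hpj : update (truncate n i) i t j = n j := by rw [update_of_ne hne, hbj]
        simpa only [hpj] using adjacent_update_add_one (update (truncate n i) i t) j)
        (n i)
      simp only [σ, if_pos hij, if_pos (by omega : (j : ℕ) < i + 1), ← update_truncate, n',
        update_of_ne hne.symm]
      rwa [update_truncate_zero, update_truncate_zero] at this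
  calc potential ω n' - potential ω n
      = ∑ i : Fin d, (σ (i + 1) - σ i) := by
        rw [potential, potential, ← Finset.sum_sub_distrib]
        exact Finset.sum_congr rfl fun i _ => hterm i
    _ = σ d - σ 0 := by
        rw [Fin.sum_univ_eq_sum_range (fun c => σ (c + 1) - σ c), Finset.sum_range_sub]
    _ = ω n' n := by simp [σ, truncate_of_le]

theorem IsClosedForm.exists_potential {ω : Site d → Site d → G} (hω : IsClosedForm ω) :
    ∃ F : Site d → G, ∀ n m, adjacent n m → F n - F m = ω n m := by
  refine ⟨potential ω, fun n m h => ?_⟩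
  obtain ⟨i, hi, hm⟩ := h.exists_eq_update
  rcases (abs_eq zero_le_one).mp hi with hi | hi
  · have hn : n = update m i (m i + 1) := by
      funext j
      rcases eq_or_ne j i with rfl | hj
      · rw [update_self]; omega
      · rw [update_of_ne hj, hm, update_of_ne hj]
    rw [hn, hω.potential_update_add_one, ← hn]
  · have := hω.potential_update_add_one n i
    rw [show n i + 1 = m i by omega, ← hm, hω.antisymm n m h] at this
    rw [← neg_sub, this, neg_neg]

end Potential

section Lift

variable {d r : ℕ}

lemma ZMod.four_ne_zero (h1 : r ≠ 1) (h2 : r ≠ 2) (h4 : r ≠ 4) : (4 : ZMod r) ≠ 0 := by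
  intro h
  have hdvd : r ∣ 4 := (ZMod.natCast_eq_zero_iff 4 r).mp (by exact_mod_cast h)
  have : r ≤ 4 := Nat.le_of_dvd (by norm_num) hdvd
  interval_cases r <;> simp_all

lemma eq_zero_of_even_of_abs_le_four (h4 : (4 : ZMod r) ≠ 0) {a : ℤ} (heven : Even a)
    (habs : |a| ≤ 4) (h : (a : ZMod r) = 0) : a = 0 := by
  obtain ⟨b, rfl⟩ := heven
  have hb : -2 ≤ b ∧ b ≤ 2 := by rw [abs_le] at habs; omega
  obtain ⟨hb₁, hb₂⟩ := hb
  interval_cases b <;> push_cast at h ⊢ <;>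
    first
      | rfl
      | (exfalso; apply h4; first
          | linear_combination h | linear_combination -h
          | linear_combination 2 * h | linear_combination -2 * h)

def liftStep (x : Site d → ZMod r) (n m : Site d) : ℤ := if x n - x m = 1 then 1 else -1

lemma liftStep_eq_one_or (x : Site d → ZMod r) (n m : Site d) :
    liftStep x n m = 1 ∨ liftStep x n m = -1 := by
  unfold liftStep
  split_ifs <;> simp

lemma intCast_liftStep {x : Site d → ZMod r} (hx : x ∈ Xr d r) {n m : Site d} (h : adjacent n m) :
    (liftStep x n m : ZMod r) = x n - x m := by
  unfold liftStep
  split_ifs with h1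
  · simp [h1]
  · rcases hx n m h with h2 | h2
    · exact absurd h2 h1
    · simp [h2]

lemma isClosedForm_liftStep {x : Site d → ZMod r} (hx : x ∈ Xr d r) (h4 : (4 : ZMod r) ≠ 0) :
    IsClosedForm (liftStep x) where
  antisymm n m h := by
    have h₁ := liftStep_eq_one_or x n m
    have h₂ := liftStep_eq_one_or x m n
    have := eq_zero_of_even_of_abs_le_four h4 (a := liftStep x m n + liftStep x n m)
      (Int.even_iff.mpr (by omega)) (abs_le.mpr ⟨by omega, by omega⟩)
      (by push_cast; rw [intCast_liftStep hx h, intCast_liftStep hx h.symm]; ring)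
    omega
  plaquette a b b' c hcb hba hcb' hb'a := by
    have h₁ := liftStep_eq_one_or x c b
    have h₂ := liftStep_eq_one_or x b a
    have h₃ := liftStep_eq_one_or x c b'
    have h₄ := liftStep_eq_one_or x b' a
    have := eq_zero_of_even_of_abs_le_four h4
      (a := liftStep x c b + liftStep x b a - (liftStep x c b' + liftStep x b' a))
      (Int.even_iff.mpr (by omega)) (abs_le.mpr ⟨by omega, by omega⟩)
      (by push_cast; rw [intCast_liftStep hx hcb, intCast_liftStep hx hba,
        intCast_liftStep hx hcb', intCast_liftStep hx hb'a]; ring)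
    omega

theorem exists_liftsTo {x : Site d → ZMod r} (hx : x ∈ Xr d r) (h4 : (4 : ZMod r) ≠ 0) :
    ∃ f : Site d → ℤ, LiftsTo f x := by
  obtain ⟨F, hF⟩ := (isClosedForm_liftStep hx h4).exists_potential
  obtain ⟨c, hc⟩ := ZMod.intCast_surjective (x 0 - (F 0 : ZMod r))
  refine ⟨fun n => F n + c, fun n m h => ?_, l1Norm_induction ?_ fun n m h _ hm => ?_⟩
  · rw [add_sub_add_right_eq_sub, hF n m h]
    rcases liftStep_eq_one_or x n m with h' | h' <;> simp [h']
  · push_cast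
    rw [hc]
    ring
  · have := congrArg (Int.cast : ℤ → ZMod r) (hF n m h)
    rw [intCast_liftStep hx h] at this
    push_cast at this hm ⊢
    linear_combination this + hm

end Lift

section Glue

variable {d r : ℕ} {x : Site d → ZMod r} {f : Site d → ℤ}

lemma LiftsTo.add_mul (hf : LiftsTo f x) (t : ℤ) : LiftsTo (fun n => f n + r * t) x :=
  ⟨fun n m h => by simpa using hf.1 n m h, fun n => by simp [hf.2 n]⟩

lemma LiftsTo.comp_add_right (hf : LiftsTo f x) (v : Site d) :
    LiftsTo (fun n => f (n + v)) (fun n => x (n + v)) :=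
  ⟨hf.1.comp_add_right v, fun n => hf.2 (n + v)⟩

lemma IsHeightFn.intCast_mem_Xr (hf : IsHeightFn f) : (fun n => (f n : ZMod r)) ∈ Xr d r := by
  intro n m h
  rcases (abs_eq zero_le_one).mp (hf n m h) with h' | h'
  · left
    rw [← Int.cast_sub, h', Int.cast_one]
  · right
    rw [← Int.cast_sub, h', Int.cast_neg, Int.cast_one]

lemma even_iff_of_intCast_eq (hr : Even r) {a b : ℤ} (h : (a : ZMod r) = b) : Even a ↔ Even b := by
  rw [ZMod.intCast_eq_intCast_iff_dvd_sub] at h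
  have h2 : (2 : ℤ) ∣ b - a := ((Int.even_coe_nat r).mpr hr).two_dvd.trans h
  exact (Int.even_sub.mp (even_iff_two_dvd.mpr h2)).symm

lemma exists_abs_sub_le_of_rangeOn_le {g : Site d → ℤ} {A : Set (Site d)} {k : ℤ}
    (hA : (g '' A).Finite) (h : RangeOn g A ≤ 2 * k) : ∃ c, ∀ q ∈ A, |g q - c| ≤ k := by
  have h' : sSup (g '' A) - sInf (g '' A) ≤ 2 * k := h
  refine ⟨sInf (g '' A) + k, fun q hq => abs_le.mpr ⟨?_, ?_⟩⟩
  · linarith [csInf_le hA.bddBelow (Set.mem_image_of_mem g hq)]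
  · linarith [le_csSup hA.bddAbove (Set.mem_image_of_mem g hq)]

theorem exists_patch_of_liftsTo {N k M : ℕ} (hr : 0 < r) (hM : 2 * N + 2 * r + k ≤ M)
    {y : Site d → ZMod r} {g : Site d → ℤ} (hf : LiftsTo f x) (hg : LiftsTo g y)
    (hfg : Even (f 0 - g 0)) (hrange : RangeOn g (siteBdry (ball d M)) ≤ 2 * k) :
    ∃ z ∈ Xr d r, (∀ n ∈ ball d N, z n = x n) ∧ ∀ n ∉ ball d M, z n = y n := by
  rw [siteBdry_ball] at hrange
  have hfin : (g '' {q | l1Norm q = M + 1}).Finite :=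
    (Set.finite_Icc (g 0 - (M + 1)) (g 0 + (M + 1))).subset <| by
      rintro _ ⟨q, hq, rfl⟩
      have := abs_le.mp (hg.1.abs_sub_apply_zero_le q)
      simp only [Set.mem_ofPred_eq] at hq
      exact ⟨by linarith, by linarith⟩
  obtain ⟨c, hc⟩ := exists_abs_sub_le_of_rangeOn_le hfin hrange
  -- shift `f` by a multiple of `2r` so that it starts at `c + δ` with `0 ≤ δ < 2r`
  set δ := (f 0 - c) % (2 * r) with hδ_def
  have hδ : 0 ≤ δ ∧ δ < 2 * r := ⟨Int.emod_nonneg _ (by omega), Int.emod_lt_of_pos _ (by omega)⟩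
  have hf' := hf.add_mul (-2 * ((f 0 - c) / (2 * r)))
  have hf'0 : f 0 + r * (-2 * ((f 0 - c) / (2 * r))) - c = δ := by
    rw [hδ_def, Int.emod_def (f 0 - c)]
    ring
  obtain ⟨z, hz, hzf, hzg⟩ := exists_heightFn_patch hf'.1 hg.1 (c := c) (R := 2 * N + δ)
    (by rw [add_sub_right_comm]; exact hfg.add ((even_two.neg.mul_right _).mul_left _))
    (Int.even_iff.mpr (by rw [hf'0]; omega))
  refine ⟨fun n => (z n : ZMod r), hz.intCast_mem_Xr, fun n hn => ?_, fun n hn => ?_⟩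
  · beta_reduce
    rw [mem_ball] at hn
    have := abs_le.mp (hf'.1.abs_sub_apply_zero_le n)
    rw [hzf n (abs_le.mpr ⟨by linarith, by linarith⟩), hf'.2]
  · beta_reduce
    rw [mem_ball, not_le] at hn
    have := abs_le.mp (hg.1.abs_sub_le_add_l1Norm_sub (s := M + 1) (fun q hq => hc q hq) n
      (by push_cast; omega))
    rw [hzg n (abs_le.mpr ⟨by push_cast at this; linarith, by push_cast at this; linarith⟩), hg.2]

variable {y : Site d → ZMod r} {g : Site d → ℤ}

lemma LiftsTo.even_sub_iff (hr : Even r) (hf : LiftsTo f x) (hg : LiftsTo g y) {n : Site d}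
    {m : ℤ} (hm : (m : ZMod r) = x n - y n) : Even (f n - g n) ↔ Even m :=
  even_iff_of_intCast_eq hr (by rw [Int.cast_sub, hf.2, hg.2, hm])

lemma LiftsTo.exists_liftsTo_even_sub (hf : LiftsTo f x) (hg : LiftsTo g y)
    (h : Odd r ∨ ∀ n, ∃ m : ℤ, Even m ∧ (m : ZMod r) = x n - y n) :
    ∃ f' : Site d → ℤ, LiftsTo f' x ∧ Even (f' 0 - g 0) := by
  rcases Nat.even_or_odd r with hr | hr
  · obtain ⟨m, hm, hmxy⟩ := h.resolve_left (Nat.not_odd_iff_even.mpr hr) 0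
    exact ⟨f, hf, (hf.even_sub_iff hr hg hmxy).mpr hm⟩
  · by_cases he : Even (f 0 - g 0)
    · exact ⟨f, hf, he⟩
    · refine ⟨_, hf.add_mul 1, ?_⟩
      rw [mul_one, add_sub_right_comm]
      exact (Int.not_even_iff_odd.mp he).add_odd ((Int.odd_coe_nat r).mpr hr)

lemma LiftsTo.even_sub_of_adjacent_zero (hr : Even r) (hf : LiftsTo f x) (hg : LiftsTo g y)
    {m : ℤ} (hm : Odd m) (hmxy : (m : ZMod r) = x 0 - y 0) {e : Site d} (he : adjacent e 0) :
    Even (f e - g 0) := by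
  have hodd := (hf.even_sub_iff hr hg hmxy).not.mpr (Int.not_even_iff_odd.mpr hm)
  have hstep := hf.1 e 0 he
  rw [abs_eq zero_le_one] at hstep
  rw [Int.even_iff] at hodd ⊢
  omega

end Glue

/-- (Patching an arbitrary finite configuration inside a non-steep
point.) For `d ≥ 2`, `r ∉ {1,2,4}`, `N, k ∈ ℕ`, `y ∈ X_r` with
`Range_{∂D_{2N+2r+k+1}}(y) ≤ 2k` and `x ∈ X_r`:
(1) if `r` is odd or `x_n - y_n` is even for all `n`, there is `z ∈ X_r` equal to `x` on
`D_N` and to `y` off `D_{2N+2r+k+1}`;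
(2) if `r` is even and `x_n - y_n` is odd for all `n`, there is `z ∈ X_r` equal to
`x(· + e₁)` on `D_N` and to `y` off `D_{2N+2r+k+1}`. -/
theorem patching_inside_non_steep
    (d r N k : ℕ) (hd : 2 ≤ d) (hr0 : 0 < r) (hr1 : r ≠ 1) (hr2 : r ≠ 2) (hr4 : r ≠ 4)
    (x y : Site d → ZMod r) (hx : x ∈ Xr d r)
    (hrange : ∃ yh : Site d → ℤ, LiftsTo yh y ∧
      RangeOn yh (siteBdry (ball d (2 * N + 2 * r + k + 1))) ≤ 2 * (k : ℤ)) :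
    ((Odd r ∨ ∀ n : Site d, ∃ m : ℤ, Even m ∧ ((m : ZMod r)) = x n - y n) →
      ∃ z ∈ Xr d r, (∀ n ∈ ball d N, z n = x n) ∧
        ∀ n ∉ ball d (2 * N + 2 * r + k + 1), z n = y n) ∧
    ((Even r ∧ ∀ n : Site d, ∃ m : ℤ, Odd m ∧ ((m : ZMod r)) = x n - y n) →
      ∃ z ∈ Xr d r,
        (∀ n ∈ ball d N, z n = x (n + Pi.single (⟨0, by omega⟩ : Fin d) 1)) ∧
        ∀ n ∉ ball d (2 * N + 2 * r + k + 1), z n = y n) := by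
  obtain ⟨g, hg, hrange⟩ := hrange
  obtain ⟨f, hf⟩ := exists_liftsTo hx (ZMod.four_ne_zero hr1 hr2 hr4)
  refine ⟨fun h => ?_, fun ⟨hr, hodd⟩ => ?_⟩
  · obtain ⟨f', hf', hpar⟩ := hf.exists_liftsTo_even_sub hg h
    exact exists_patch_of_liftsTo hr0 (Nat.le_succ _) hf' hg hpar hrange
  · obtain ⟨m, hm, hmxy⟩ := hodd 0
    refine exists_patch_of_liftsTo hr0 (Nat.le_succ _) (hf.comp_add_right _) hg ?_ hrange
    simpa using hf.even_sub_of_adjacent_zero hr hg hm hmxy (adjacent_single_zero _)
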